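/- arXiv:1811.02927 — 4 statements merged into one kernel-verified Lean document; each statement's English description precedes it below -/
import Mathlib

section
/- Let (A,V,χ) be a twisted space. Then ∇_χ(x) = x·1_A for all x ∈ A⊗V, ∇_χ is idempotent (∇_χ∘∇_χ = ∇_χ), ∇_χ is left and right A-linear (∇_χ(a·x) = a·∇_χ(x) and ∇_χ(x·a) = ∇_χ(x)·a for all a ∈ A, x ∈ A⊗V), and χ(v⊗a) ∈ A×V for all v ∈ V, a ∈ A. -/
open TensorProduct

noncomputable section

namespace WeakCrossedProduct

variable {k : Type*} [Field k]
variable {A : Type*} [Ring A] [Algebra k A]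
variable {V : Type*} [AddCommGroup V] [Module k V]

/-- The map `A ⊗ₖ (A ⊗ₖ V) → A ⊗ₖ V`, `a ⊗ x ↦ a • x`, i.e. `μ_A ⊗ id_V`. -/
def actMap : A ⊗[k] (A ⊗[k] V) →ₗ[k] A ⊗[k] V :=
  TensorProduct.lift (LinearMap.mk₂ k (fun (a : A) (x : A ⊗[k] V) => a • x)
    (fun a b x => add_smul a b x)
    (fun c a x => smul_assoc c a x)
    (fun a x y => smul_add a x y)
    (fun c a x => smul_comm a c x))

/-- Given `g : V → A ⊗ V`, the map `A ⊗ V → A ⊗ V`, `a ⊗ u ↦ a • g u`. -/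
def smulMap (g : V →ₗ[k] A ⊗[k] V) : A ⊗[k] V →ₗ[k] A ⊗[k] V :=
  TensorProduct.lift (LinearMap.mk₂ k (fun (a : A) (u : V) => a • g u)
    (fun a b u => add_smul a b (g u))
    (fun c a u => smul_assoc c a (g u))
    (fun a u u' => show a • g (u + u') = a • g u + a • g u' by
      rw [map_add, smul_add])
    (fun c a u => show a • g (c • u) = c • (a • g u) by
      rw [map_smul]; exact smul_comm a c (g u)))

/-- The right action of `a' ∈ A` on `A ⊗ V`: `(a ⊗ v) · a' := a • χ (v ⊗ a')`. -/
def ract (χ : V ⊗[k] A →ₗ[k] A ⊗[k] V) (a' : A) : A ⊗[k] V →ₗ[k] A ⊗[k] V :=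
  smulMap (χ ∘ₗ (TensorProduct.mk k V A).flip a')

/-- `(A,V,χ)` is a twisted space:
`χ ∘ (id_V ⊗ μ_A) = (μ_A ⊗ id_V) ∘ (id_A ⊗ χ) ∘ (χ ⊗ id_A)` (stated on pure tensors). -/
def IsTwisting (χ : V ⊗[k] A →ₗ[k] A ⊗[k] V) : Prop :=
  ∀ (v : V) (a b : A), χ (v ⊗ₜ[k] (a * b)) = ract χ b (χ (v ⊗ₜ[k] a))

/-- `∇_χ(x) := x · 1_A`. -/
def nabla (χ : V ⊗[k] A →ₗ[k] A ⊗[k] V) : A ⊗[k] V →ₗ[k] A ⊗[k] V :=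
  ract χ 1

/-- `A × V := ∇_χ(A ⊗ V)`. -/
def AxV (χ : V ⊗[k] A →ₗ[k] A ⊗[k] V) : Submodule k (A ⊗[k] V) :=
  LinearMap.range (nabla χ)

/-- `X_χ := {x ∈ A ⊗ V : x · 1_A = 0}`. -/
def Xchi (χ : V ⊗[k] A →ₗ[k] A ⊗[k] V) : Submodule k (A ⊗[k] V) :=
  LinearMap.ker (nabla χ)

/-- `μ_𝓔 := (μ_A ⊗ id_V) ∘ (μ_A ⊗ F) ∘ (id_A ⊗ χ ⊗ id_V)`. -/
def muE (χ : V ⊗[k] A →ₗ[k] A ⊗[k] V) (F : V ⊗[k] V →ₗ[k] A ⊗[k] V) :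
    (A ⊗[k] V) ⊗[k] (A ⊗[k] V) →ₗ[k] A ⊗[k] V :=
  actMap ∘ₗ
  LinearMap.lTensor A (actMap) ∘ₗ
  LinearMap.lTensor A (LinearMap.lTensor A F ∘ₗ (TensorProduct.assoc k A V V).toLinearMap) ∘ₗ
  LinearMap.lTensor A (LinearMap.rTensor V χ) ∘ₗ
  LinearMap.lTensor A (TensorProduct.assoc k V A V).symm.toLinearMap ∘ₗ
  (TensorProduct.assoc k A V (A ⊗[k] V)).toLinearMap

/-- The twisted module condition (stated on pure tensors). -/
def TwistedModuleCond (χ : V ⊗[k] A →ₗ[k] A ⊗[k] V) (F : V ⊗[k] V →ₗ[k] A ⊗[k] V) : Prop :=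
  ∀ (v w : V) (a : A),
    ract χ a (F (v ⊗ₜ[k] w)) = muE χ F (((1 : A) ⊗ₜ[k] v) ⊗ₜ[k] χ (w ⊗ₜ[k] a))

/-- The cocycle condition (stated on pure tensors). -/
def CocycleCond (χ : V ⊗[k] A →ₗ[k] A ⊗[k] V) (F : V ⊗[k] V →ₗ[k] A ⊗[k] V) : Prop :=
  ∀ (v w u : V),
    smulMap (F ∘ₗ (TensorProduct.mk k V V).flip u) (F (v ⊗ₜ[k] w)) =
      muE χ F (((1 : A) ⊗ₜ[k] v) ⊗ₜ[k] F (w ⊗ₜ[k] u))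

/-- Preunit condition (i). -/
def Preunit1 (χ : V ⊗[k] A →ₗ[k] A ⊗[k] V) (F : V ⊗[k] V →ₗ[k] A ⊗[k] V)
    (ν : A ⊗[k] V) : Prop :=
  ∀ v : V, muE χ F (((1 : A) ⊗ₜ[k] v) ⊗ₜ[k] ν) = nabla χ ((1 : A) ⊗ₜ[k] v)

/-- Preunit condition (ii). -/
def Preunit2 (χ : V ⊗[k] A →ₗ[k] A ⊗[k] V) (F : V ⊗[k] V →ₗ[k] A ⊗[k] V)
    (ν : A ⊗[k] V) : Prop :=
  ∀ v : V, smulMap (F ∘ₗ (TensorProduct.mk k V V).flip v) ν = nabla χ ((1 : A) ⊗ₜ[k] v)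

/-- Preunit condition (iii). -/
def Preunit3 (χ : V ⊗[k] A →ₗ[k] A ⊗[k] V) (ν : A ⊗[k] V) : Prop :=
  ∀ a : A, ract χ a ν = a • ν

/-- `γ(v) := ∇_χ(1_A ⊗ v)`. -/
def gammaMap (χ : V ⊗[k] A →ₗ[k] A ⊗[k] V) : V → A ⊗[k] V :=
  fun v => nabla χ ((1 : A) ⊗ₜ[k] v)

/-- `j'_ν(a) := a · ν(1)`. -/
def jnu' (ν : A ⊗[k] V) : A → A ⊗[k] V := fun a => a • ν

/-- `j_ν(a) := ∇_χ(j'_ν(a))`. -/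
def jnu (χ : V ⊗[k] A →ₗ[k] A ⊗[k] V) (ν : A ⊗[k] V) : A → A ⊗[k] V :=
  fun a => nabla χ (a • ν)

lemma ract_tmul (χ : V ⊗[k] A →ₗ[k] A ⊗[k] V) (a' a : A) (v : V) :
    ract χ a' (a ⊗ₜ[k] v) = a • χ (v ⊗ₜ[k] a') := rfl

lemma ract_Asmul (χ : V ⊗[k] A →ₗ[k] A ⊗[k] V) (a' c : A) (x : A ⊗[k] V) :
    ract χ a' (c • x) = c • ract χ a' x := by
  induction x using TensorProduct.induction_on with
  | zero => simp
  | tmul a v =>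
      rw [smul_tmul', smul_eq_mul, ract_tmul, ract_tmul, mul_smul]
  | add x y hx hy =>
      rw [smul_add, map_add, hx, hy, map_add, smul_add]

theorem statement_1 (χ : V ⊗[k] A →ₗ[k] A ⊗[k] V) (hχ : IsTwisting χ) :
    (∀ x : A ⊗[k] V, nabla χ x = ract χ 1 x) ∧
    (∀ (a : A) (v : V), nabla χ (a ⊗ₜ[k] v) = a • χ (v ⊗ₜ[k] (1 : A))) ∧
    (∀ x : A ⊗[k] V, nabla χ (nabla χ x) = nabla χ x) ∧
    (∀ (a : A) (x : A ⊗[k] V), nabla χ (a • x) = a • nabla χ x) ∧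
    (∀ (a : A) (x : A ⊗[k] V), nabla χ (ract χ a x) = ract χ a (nabla χ x)) ∧
    (∀ (v : V) (a : A), χ (v ⊗ₜ[k] a) ∈ AxV χ) := by
  have hfix : ∀ (v : V) (a : A), nabla χ (χ (v ⊗ₜ[k] a)) = χ (v ⊗ₜ[k] a) := by
    intro v a
    have := hχ v a 1
    rw [mul_one] at this
    exact this.symm
  refine ⟨fun x => rfl, fun a v => rfl, ?_, ?_, ?_, ?_⟩
  · intro x
    induction x using TensorProduct.induction_on with
    | zero => simp
    | tmul a v =>
        show nabla χ (a • χ (v ⊗ₜ[k] 1)) = a • χ (v ⊗ₜ[k] 1)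
        rw [show nabla χ = ract χ 1 from rfl, ract_Asmul]
        exact congrArg (a • ·) (hfix v 1)
    | add x y hx hy => rw [map_add, map_add, hx, hy]
  · intro a x
    exact ract_Asmul χ 1 a x
  · intro a x
    induction x using TensorProduct.induction_on with
    | zero => simp
    | tmul a' v =>
        rw [ract_tmul, show nabla χ = ract χ 1 from rfl, ract_Asmul,
          ract_tmul, ract_Asmul]
        congr 1
        have h1 := hχ v a 1
        have h2 := hχ v 1 a
        rw [mul_one] at h1
        rw [one_mul] at h2
        rw [← h1, ← h2]
    | add x y hx hy => simp only [map_add, hx, hy]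
  · intro v a
    exact ⟨χ (v ⊗ₜ[k] a), hfix v a⟩

end WeakCrossedProduct
end
end

section
/- Let (A,V,χ) be a twisted space and set X_χ := {x ∈ A⊗V : x·1_A = 0}. Then A×V = {x ∈ A⊗V : x·1_A = x}, X_χ is an A-subbimodule of A⊗V, A⊗V is the internal direct sum of the subspaces A×V and X_χ, and the projection of A⊗V onto A×V along X_χ coincides with ∇_χ. In particular A×V is a unitary A-subbimodule of A⊗V (x·1_A = x for every x ∈ A×V, and A×V is stable under both A-actions). -/
open TensorProduct

noncomputable section

namespace WeakCrossedProduct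

variable {k : Type*} [Field k]
variable {A : Type*} [Ring A] [Algebra k A]
variable {V : Type*} [AddCommGroup V] [Module k V]

lemma ract_smul (χ : V ⊗[k] A →ₗ[k] A ⊗[k] V) (a' a : A) (x : A ⊗[k] V) :
    ract χ a' (a • x) = a • ract χ a' x := by
  induction x with
  | zero => simp
  | tmul c w =>
      rw [TensorProduct.smul_tmul', ract_tmul, ract_tmul, smul_eq_mul, mul_smul]
  | add y z hy hz => rw [smul_add, map_add, hy, hz, map_add, smul_add]

lemma ract_mul (χ : V ⊗[k] A →ₗ[k] A ⊗[k] V) (hχ : IsTwisting χ) (a b : A)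
    (x : A ⊗[k] V) : ract χ (a * b) x = ract χ b (ract χ a x) := by
  induction x with
  | zero => simp
  | tmul c w =>
      rw [ract_tmul, ract_tmul, ract_smul, hχ]
  | add y z hy hz => rw [map_add, map_add, map_add, hy, hz]

lemma nabla_idem (χ : V ⊗[k] A →ₗ[k] A ⊗[k] V) (hχ : IsTwisting χ)
    (x : A ⊗[k] V) : nabla χ (nabla χ x) = nabla χ x := by
  rw [nabla, ← ract_mul χ hχ, one_mul]

theorem statement_2 (χ : V ⊗[k] A →ₗ[k] A ⊗[k] V) (hχ : IsTwisting χ) :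
    (∀ x : A ⊗[k] V, x ∈ AxV χ ↔ ract χ 1 x = x) ∧
    (∀ (a : A) (x : A ⊗[k] V), x ∈ Xchi χ → a • x ∈ Xchi χ ∧ ract χ a x ∈ Xchi χ) ∧
    IsCompl (AxV χ) (Xchi χ) ∧
    (∀ x : A ⊗[k] V, nabla χ x ∈ AxV χ ∧ x - nabla χ x ∈ Xchi χ) ∧
    (∀ x ∈ AxV χ, ract χ 1 x = x) ∧
    (∀ (a : A) (x : A ⊗[k] V), x ∈ AxV χ → a • x ∈ AxV χ ∧ ract χ a x ∈ AxV χ) := by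
  have hmem : ∀ x : A ⊗[k] V, x ∈ AxV χ ↔ ract χ 1 x = x := by
    intro x
    constructor
    · rintro ⟨y, rfl⟩
      exact nabla_idem χ hχ y
    · intro h
      exact ⟨x, h⟩
  refine ⟨hmem, ?_, ?_, ?_, fun x hx => (hmem x).mp hx, ?_⟩
  · intro a x hx
    have hx0 : nabla χ x = 0 := hx
    constructor
    · show nabla χ (a • x) = 0
      rw [nabla, ract_smul, ← nabla, hx0, smul_zero]
    · show nabla χ (ract χ a x) = 0
      rw [nabla, ← ract_mul χ hχ, mul_one, ← one_mul a, ract_mul χ hχ, ← nabla,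
        hx0, map_zero]
  · constructor
    · rw [Submodule.disjoint_def]
      intro x hx hx0
      have h1 : ract χ 1 x = x := (hmem x).mp hx
      have h2 : nabla χ x = 0 := hx0
      rw [nabla] at h2
      rw [← h1, h2]
    · rw [codisjoint_iff, eq_top_iff]
      intro x _
      have : x = nabla χ x + (x - nabla χ x) := by abel
      rw [this]
      refine Submodule.add_mem_sup ⟨x, rfl⟩ ?_
      show nabla χ (x - nabla χ x) = 0
      rw [map_sub, nabla_idem χ hχ, sub_self]
  · intro x
    refine ⟨⟨x, rfl⟩, ?_⟩
    show nabla χ (x - nabla χ x) = 0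
    rw [map_sub, nabla_idem χ hχ, sub_self]
  · intro a x hx
    have h1 : ract χ 1 x = x := (hmem x).mp hx
    constructor
    · exact ⟨a • x, by rw [nabla, ract_smul, ← nabla, show nabla χ x = ract χ 1 x from rfl, h1]⟩
    · refine (hmem _).mpr ?_
      rw [← ract_mul χ hχ, mul_one, ← one_mul a, ract_mul χ hχ, h1]

end WeakCrossedProduct
end
end

section
/- Let (A,V,χ,F,ν) be a crossed product system with preunit and assume F is a cocycle satisfying the twisted module condition. Then ν(1) is a central idempotent for μ_𝓔, that is, μ_𝓔(ν(1)⊗x) = μ_𝓔(x⊗ν(1)) for all x ∈ A⊗V and μ_𝓔(ν(1)⊗ν(1)) = ν(1); moreover μ_𝓔(x⊗ν(1)) = ∇_χ(x) for all x ∈ A⊗V (i.e. ∇_ν = ∇_χ), and ν(1) ∈ A×V. -/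
open TensorProduct

noncomputable section

namespace WeakCrossedProduct

variable {k : Type*} [Field k]
variable {A : Type*} [Ring A] [Algebra k A]
variable {V : Type*} [AddCommGroup V] [Module k V]

lemma smulMap_tmul (g : V →ₗ[k] A ⊗[k] V) (a : A) (u : V) :
    smulMap g (a ⊗ₜ[k] u) = a • g u := rfl

lemma actMap_tmul (a : A) (x : A ⊗[k] V) : (actMap : A ⊗[k] (A ⊗[k] V) →ₗ[k] A ⊗[k] V) (a ⊗ₜ[k] x) = a • x := rfl

lemma smulMap_smul (g : V →ₗ[k] A ⊗[k] V) (a : A) (x : A ⊗[k] V) :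
    smulMap g (a • x) = a • smulMap g x := by
  induction x using TensorProduct.induction_on with
  | zero => simp
  | tmul b u =>
      rw [TensorProduct.smul_tmul', smulMap_tmul, smulMap_tmul, smul_eq_mul, mul_smul]
  | add x y hx hy =>
      rw [smul_add, map_add, map_add, hx, hy, smul_add]

lemma nabla_smul (χ : V ⊗[k] A →ₗ[k] A ⊗[k] V) (a : A) (x : A ⊗[k] V) :
    nabla χ (a • x) = a • nabla χ x := smulMap_smul _ a x

lemma nabla_tmul' (χ : V ⊗[k] A →ₗ[k] A ⊗[k] V) (a : A) (v : V) :
    nabla χ (a ⊗ₜ[k] v) = a • nabla χ ((1 : A) ⊗ₜ[k] v) := by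
  have : a ⊗ₜ[k] v = a • ((1 : A) ⊗ₜ[k] v) := by
    rw [TensorProduct.smul_tmul', smul_eq_mul, mul_one]
  rw [this, nabla_smul]

lemma muE_tmul (χ : V ⊗[k] A →ₗ[k] A ⊗[k] V) (F : V ⊗[k] V →ₗ[k] A ⊗[k] V)
    (a b : A) (v w : V) :
    muE χ F ((a ⊗ₜ[k] v) ⊗ₜ[k] (b ⊗ₜ[k] w)) =
      a • smulMap (F ∘ₗ (TensorProduct.mk k V V).flip w) (χ (v ⊗ₜ[k] b)) := by
  rw [muE]
  simp only [LinearMap.coe_comp, Function.comp_apply, LinearEquiv.coe_coe,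
    TensorProduct.assoc_tmul, LinearMap.lTensor_tmul, TensorProduct.assoc_symm_tmul,
    LinearMap.rTensor_tmul, actMap_tmul]
  congr 1
  induction χ (v ⊗ₜ[k] b) using TensorProduct.induction_on with
  | zero => simp
  | tmul c u =>
      simp [smulMap_tmul, TensorProduct.assoc_tmul, actMap_tmul]
  | add x y hx hy => simp only [map_add, TensorProduct.add_tmul, hx, hy]

lemma muE_smul_left (χ : V ⊗[k] A →ₗ[k] A ⊗[k] V) (F : V ⊗[k] V →ₗ[k] A ⊗[k] V)
    (a : A) (v : V) (y : A ⊗[k] V) :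
    muE χ F ((a ⊗ₜ[k] v) ⊗ₜ[k] y) = a • muE χ F (((1 : A) ⊗ₜ[k] v) ⊗ₜ[k] y) := by
  induction y using TensorProduct.induction_on with
  | zero => simp
  | tmul b w => rw [muE_tmul, muE_tmul, one_smul]
  | add x y hx hy =>
      rw [TensorProduct.tmul_add, TensorProduct.tmul_add, map_add, map_add, hx, hy, smul_add]

lemma muE_left_ract (χ : V ⊗[k] A →ₗ[k] A ⊗[k] V) (F : V ⊗[k] V →ₗ[k] A ⊗[k] V)
    (b : A) (w : V) (y : A ⊗[k] V) :
    muE χ F (y ⊗ₜ[k] (b ⊗ₜ[k] w)) =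
      smulMap (F ∘ₗ (TensorProduct.mk k V V).flip w) (ract χ b y) := by
  induction y using TensorProduct.induction_on with
  | zero => simp
  | tmul a v => rw [muE_tmul, ract_tmul, smulMap_smul]
  | add x y hx hy =>
      rw [TensorProduct.add_tmul, map_add, map_add, map_add, hx, hy]

theorem statement_5 (χ : V ⊗[k] A →ₗ[k] A ⊗[k] V) (F : V ⊗[k] V →ₗ[k] A ⊗[k] V)
    (ν : A ⊗[k] V)
    (hχ : IsTwisting χ) (hF : ∀ x : V ⊗[k] V, F x ∈ AxV χ)
    (hν1 : Preunit1 χ F ν) (hν2 : Preunit2 χ F ν) (hν3 : Preunit3 χ ν)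
    (htm : TwistedModuleCond χ F) (hcoc : CocycleCond χ F) :
    (∀ x : A ⊗[k] V, muE χ F (ν ⊗ₜ[k] x) = muE χ F (x ⊗ₜ[k] ν)) ∧
    muE χ F (ν ⊗ₜ[k] ν) = ν ∧
    (∀ x : A ⊗[k] V, muE χ F (x ⊗ₜ[k] ν) = nabla χ x) ∧
    ν ∈ AxV χ := by
  have hnuν : nabla χ ν = ν := by
    have := hν3 1
    rw [nabla, this, one_smul]
  have hright : ∀ x : A ⊗[k] V, muE χ F (x ⊗ₜ[k] ν) = nabla χ x := by
    intro x
    induction x using TensorProduct.induction_on with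
    | zero => simp
    | tmul a v => rw [muE_smul_left, hν1 v, ← nabla_tmul']
    | add x y hx hy =>
        rw [TensorProduct.add_tmul, map_add, map_add, hx, hy]
  have hleft : ∀ x : A ⊗[k] V, muE χ F (ν ⊗ₜ[k] x) = nabla χ x := by
    intro x
    induction x using TensorProduct.induction_on with
    | zero => simp
    | tmul b w =>
        rw [muE_left_ract, hν3 b, smulMap_smul, hν2 w, ← nabla_tmul']
    | add x y hx hy =>
        rw [TensorProduct.tmul_add, map_add, map_add, hx, hy]
  refine ⟨fun x => by rw [hleft x, hright x], ?_, hright, ⟨ν, hnuν⟩⟩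
  rw [hleft ν, hnuν]

end WeakCrossedProduct
end
end

section
/- Let (A,V,χ) be a twisted space, let 1_V ∈ V, and let F : V⊗V → A⊗V be a k-linear map with image contained in A×V. Assume χ(1_V⊗a) = a·χ(1_V⊗1_A) for all a ∈ A, F is a cocycle satisfying the twisted module condition, and F(1_V⊗v) = F(v⊗1_V) = χ(v⊗1_A) for all v ∈ V. Then, defining ν : k → A⊗V by ν(1) := χ(1_V⊗1_A), the tuple (A,V,χ,F,ν) is a crossed product system with preunit, i.e. the three preunit identities (i), (ii), (iii) hold. -/
open TensorProduct

noncomputable section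

namespace WeakCrossedProduct

variable {k : Type*} [Field k]
variable {A : Type*} [Ring A] [Algebra k A]
variable {V : Type*} [AddCommGroup V] [Module k V]

theorem statement_12 (χ : V ⊗[k] A →ₗ[k] A ⊗[k] V) (F : V ⊗[k] V →ₗ[k] A ⊗[k] V)
    (oneV : V)
    (hχ : IsTwisting χ) (hF : ∀ x : V ⊗[k] V, F x ∈ AxV χ)
    (h1 : ∀ a : A, χ (oneV ⊗ₜ[k] a) = a • χ (oneV ⊗ₜ[k] (1 : A)))
    (htm : TwistedModuleCond χ F) (hcoc : CocycleCond χ F)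
    (hFl : ∀ v : V, F (oneV ⊗ₜ[k] v) = χ (v ⊗ₜ[k] (1 : A)))
    (hFr : ∀ v : V, F (v ⊗ₜ[k] oneV) = χ (v ⊗ₜ[k] (1 : A))) :
    Preunit1 χ F (χ (oneV ⊗ₜ[k] (1 : A))) ∧
    Preunit2 χ F (χ (oneV ⊗ₜ[k] (1 : A))) ∧
    Preunit3 χ (χ (oneV ⊗ₜ[k] (1 : A))) := by
  have hract : ∀ (v : V) (b a : A), ract χ a (χ (v ⊗ₜ[k] b)) = χ (v ⊗ₜ[k] (b * a)) :=
    fun v b a => (hχ v b a).symm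
  have hnabχ : ∀ (v : V) (b : A), nabla χ (χ (v ⊗ₜ[k] b)) = χ (v ⊗ₜ[k] b) := by
    intro v b
    rw [nabla, hract, mul_one]
  have hnab1 : ∀ v : V, nabla χ ((1 : A) ⊗ₜ[k] v) = χ (v ⊗ₜ[k] (1 : A)) := by
    intro v
    rw [nabla, ract_tmul, one_smul]
  refine ⟨?_, ?_, ?_⟩
  · intro v
    have h := htm v oneV 1
    rw [hFr] at h
    rw [← h]
    show nabla χ (χ (v ⊗ₜ[k] (1 : A))) = _
    rw [hnabχ, hnab1]
  · intro v
    have hc := hcoc oneV oneV v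
    rw [hFl, hFl] at hc
    have h := htm oneV v 1
    rw [hFl] at h
    rw [hc, ← h]
    show nabla χ (χ (v ⊗ₜ[k] (1 : A))) = _
    rw [hnabχ, hnab1]
  · intro a
    rw [hract, one_mul, h1]

end WeakCrossedProduct
end
end
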